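/- arXiv:0905.0735 — 3 statements merged into one kernel-verified Lean document; each statement's English description precedes it below -/
import Mathlib

section
/- Let Λ be a k-graph and let μ, ν ∈ Λ with s(μ) = s(ν), r(μ) = r(ν), and m ∈ ℕ^k with m ≤ d(μ) ∧ d(ν) and μ(0,m) = ν(0,m). Then for any τ ∈ s(μ)Λ, MCE(μτ, ντ) = { μ(0,m)·ρ : ρ ∈ MCE(μ(m,d(μ))τ, ν(m,d(ν))τ) }; in particular MCE(μτ, ντ) is empty if and only if MCE(μ(m,d(μ))τ, ν(m,d(ν))τ) is empty. -/
/-- A `k`-graph: a countable category `Λ` with a degree functor `d : Λ → ℕ^k`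
satisfying the factorisation property. Morphisms form the type `Mor`,
objects (vertices) the type `Obj`. -/
structure KGraph (k : ℕ) where
  Obj : Type
  Mor : Type
  countableObj : Countable Obj
  countableMor : Countable Mor
  r : Mor → Obj
  s : Mor → Obj
  d : Mor → (Fin k → ℕ)
  id : Obj → Mor
  comp : ∀ μ ν : Mor, s μ = r ν → Mor
  r_id : ∀ v, r (id v) = v
  s_id : ∀ v, s (id v) = v
  d_id : ∀ v, d (id v) = 0
  r_comp : ∀ μ ν h, r (comp μ ν h) = r μ
  s_comp : ∀ μ ν h, s (comp μ ν h) = s ν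
  d_comp : ∀ μ ν h, d (comp μ ν h) = d μ + d ν
  id_comp : ∀ μ : Mor, comp (id (r μ)) μ (s_id (r μ)) = μ
  comp_id : ∀ μ : Mor, comp μ (id (s μ)) ((r_id (s μ)).symm) = μ
  assoc : ∀ (μ ν ρ : Mor) (h₁ : s μ = r ν) (h₂ : s ν = r ρ),
    comp (comp μ ν h₁) ρ ((s_comp μ ν h₁).trans h₂)
      = comp μ (comp ν ρ h₂) (h₁.trans (r_comp ν ρ h₂).symm)
  factor : ∀ (lam : Mor) (m n : Fin k → ℕ), d lam = m + n →
    ∃! p : {q : Mor × Mor // s q.1 = r q.2},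
      d p.val.1 = m ∧ d p.val.2 = n ∧ lam = comp p.val.1 p.val.2 p.property

namespace KGraph

variable {k : ℕ} (Λ : KGraph k)

/-- `μ` is an initial segment of `lam`, i.e. `lam = μρ` for some `ρ`. -/
def InitSeg (μ lam : Λ.Mor) : Prop :=
  ∃ (ρ : Λ.Mor) (h : Λ.s μ = Λ.r ρ), lam = Λ.comp μ ρ h

/-- The set of minimal common extensions of `μ` and `ν`. -/
def MCE (μ ν : Λ.Mor) : Set Λ.Mor :=
  {lam | Λ.d lam = Λ.d μ ⊔ Λ.d ν ∧ Λ.InitSeg μ lam ∧ Λ.InitSeg ν lam}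

/-- `Λ` is finitely aligned if all `MCE` sets are finite. -/
def FinitelyAligned : Prop := ∀ μ ν : Λ.Mor, (Λ.MCE μ ν).Finite

/-- Aperiodicity: distinct paths with the same source admit a common
extension `τ` with `MCE (ατ, βτ) = ∅`. -/
def Aperiodic : Prop :=
  ∀ α β : Λ.Mor, α ≠ β → Λ.s α = Λ.s β →
    ∃ (τ : Λ.Mor) (hα : Λ.s α = Λ.r τ) (hβ : Λ.s β = Λ.r τ),
      Λ.MCE (Λ.comp α τ hα) (Λ.comp β τ hβ) = ∅

/-- `E` is a finite exhaustive subset of `vΛ`. -/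
def IsFE (v : Λ.Obj) (E : Set Λ.Mor) : Prop :=
  E.Finite ∧ (∀ α ∈ E, Λ.r α = v) ∧
    ∀ μ : Λ.Mor, Λ.r μ = v → ∃ lam ∈ E, (Λ.MCE μ lam).Nonempty

/-- The segment `lam(p,q)` of a path `lam`, for `p ≤ q ≤ d lam`,
obtained from the factorisation property. -/
noncomputable def seg (lam : Λ.Mor) (p q : Fin k → ℕ) (hpq : p ≤ q) (hq : q ≤ Λ.d lam) :
    Λ.Mor := by
  have h1 : Λ.d lam = p + (Λ.d lam - p) := by
    funext i; exact (Nat.add_sub_cancel' ((hpq.trans hq) i)).symm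
  have hspec := (Λ.factor lam p (Λ.d lam - p) h1).exists.choose_spec
  refine (Λ.factor ((Λ.factor lam p (Λ.d lam - p) h1).exists.choose).val.2
      (q - p) (Λ.d lam - q) ?_).exists.choose.val.1
  rw [hspec.2.1]
  funext i
  have h3 : p i ≤ q i := hpq i
  have h4 : q i ≤ Λ.d lam i := hq i
  simp only [Pi.sub_apply, Pi.add_apply]
  omega

/-- A (possibly infinite) path in `Λ`: a degree-preserving functor from
`Ω_{k,m}` (for `m = deg ∈ (ℕ ∪ {∞})^k`) to `Λ`, recorded by its segments. -/
structure InfPath (Λ : KGraph k) where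
  deg : Fin k → ℕ∞
  seg : ∀ p q : Fin k → ℕ, p ≤ q → (∀ i, (q i : ℕ∞) ≤ deg i) → Λ.Mor
  d_seg : ∀ p q hpq hq, Λ.d (seg p q hpq hq) = q - p
  comp_seg : ∀ (p q r : Fin k → ℕ) (hpq : p ≤ q) (hqr : q ≤ r)
      (hq : ∀ i, (q i : ℕ∞) ≤ deg i) (hr : ∀ i, (r i : ℕ∞) ≤ deg i),
    ∃ h : Λ.s (seg p q hpq hq) = Λ.r (seg q r hqr hr),
      Λ.comp (seg p q hpq hq) (seg q r hqr hr) h = seg p r (hpq.trans hqr) hr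

/-- The vertex `x(n)` of an infinite path. -/
def InfPath.vert {Λ : KGraph k} (x : Λ.InfPath) (n : Fin k → ℕ) (hn : ∀ i, (n i : ℕ∞) ≤ x.deg i) : Λ.Obj :=
  Λ.r (x.seg n n le_rfl hn)

/-- The range `r(x) = x(0)` of an infinite path. -/
def InfPath.rng {Λ : KGraph k} (x : Λ.InfPath) : Λ.Obj :=
  Λ.r (x.seg 0 0 le_rfl (fun i => by simp))

/-- `x` is a boundary path: it hits every finite exhaustive set. -/
def IsBoundary (x : Λ.InfPath) : Prop :=
  ∀ (n : Fin k → ℕ) (hn : ∀ i, (n i : ℕ∞) ≤ x.deg i) (E : Set Λ.Mor),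
    Λ.IsFE (x.vert n hn) E →
    ∃ (p : Fin k → ℕ) (hp : ∀ i, ((n + p) i : ℕ∞) ≤ x.deg i),
      x.seg n (n + p) le_self_add hp ∈ E

/-- The set of boundary paths with range `v` is `v∂Λ`. -/

private lemma enat_aux {a b : ℕ} {D : ℕ∞} (h2 : (a : ℕ∞) ≤ D) (h1 : (b : ℕ∞) ≤ D - a) :
    ((a + b : ℕ) : ℕ∞) ≤ D := by
  cases D with
  | top => exact le_top
  | coe dN =>
    have ha : a ≤ dN := by exact_mod_cast h2
    rw [← ENat.coe_sub] at h1
    have hb : b ≤ dN - a := by exact_mod_cast h1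
    exact_mod_cast (by omega : a + b ≤ dN)

/-- The shifted path `σ^m(x)`. -/
def InfPath.shift {Λ : KGraph k} (x : Λ.InfPath) (m : Fin k → ℕ) (hm : ∀ i, (m i : ℕ∞) ≤ x.deg i) :
    Λ.InfPath where
  deg := fun i => x.deg i - (m i : ℕ∞)
  seg := fun p q hpq hq => x.seg (m + p) (m + q) (add_le_add_right hpq m)
    (fun i => by
      have := enat_aux (hm i) (hq i)
      simpa using this)
  d_seg := fun p q hpq hq => by
    rw [x.d_seg]
    funext i
    simp only [Pi.sub_apply, Pi.add_apply]
    omega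
  comp_seg := fun p q r hpq hqr hq hr =>
    x.comp_seg (m + p) (m + q) (m + r) (add_le_add_right hpq m) (add_le_add_right hqr m) _ _

/-- `w = lam · z` : the path `w` extends `z` by the finite path `lam`,
i.e. `w(0, d lam) = lam` and `σ^{d lam}(w) = z`. -/
def InfPath.ExtendsBy {Λ : KGraph k} (w z : Λ.InfPath) (lam : Λ.Mor) : Prop :=
  ∃ h : ∀ i, ((Λ.d lam) i : ℕ∞) ≤ w.deg i,
    w.seg 0 (Λ.d lam) zero_le h = lam ∧ w.shift (Λ.d lam) h = z

/-- Local periodicity `m, n` at `v`. -/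
def LocalPeriodicity (m n : Fin k → ℕ) (v : Λ.Obj) : Prop :=
  ∀ x : Λ.InfPath, Λ.IsBoundary x → x.rng = v →
    (∀ i, (((m ⊔ n) i : ℕ) : ℕ∞) ≤ x.deg i) ∧
    ∃ (hm : ∀ i, (m i : ℕ∞) ≤ x.deg i) (hn : ∀ i, (n i : ℕ∞) ≤ x.deg i),
      x.shift m hm = x.shift n hn

/-- Cofinality of `Λ`, stated in terms of finite paths. -/
def Cofinal : Prop :=
  ∀ v w : Λ.Obj, ∃ E : Set Λ.Mor, Λ.IsFE w E ∧
    ∀ α ∈ E, ∃ lam : Λ.Mor, Λ.r lam = v ∧ Λ.s lam = Λ.s α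


/-! By unique factorisation, composing on the left with a fixed path `α` is injective, shifts
degrees by `d α` and preserves initial segments, so `MCE(αβ, αγ) = α · MCE(β, γ)`. Since
`μ(0,m) = ν(0,m)`, the paths `μτ` and `ντ` are `μ(0,m) (μ(m,d μ) τ)` and `μ(0,m) (ν(m,d ν) τ)`. -/

lemma comp_congr {α β α' β' : Λ.Mor} (h : Λ.s α = Λ.r β) (h' : Λ.s α' = Λ.r β')
    (hα : α = α') (hβ : β = β') : Λ.comp α β h = Λ.comp α' β' h' := by
  subst hα hβ; rfl

lemma eq_and_eq_of_comp_eq_comp {α β α' β' : Λ.Mor} (h : Λ.s α = Λ.r β)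
    (h' : Λ.s α' = Λ.r β') (hc : Λ.comp α β h = Λ.comp α' β' h') (hd : Λ.d α = Λ.d α') :
    α = α' ∧ β = β' := by
  have hdβ : Λ.d β' = Λ.d β := by
    have := (Λ.d_comp α β h).symm.trans (hc ▸ Λ.d_comp α' β' h')
    rw [hd] at this
    exact (add_left_cancel this).symm
  have := (Λ.factor _ (Λ.d α) (Λ.d β) (Λ.d_comp α β h)).unique (y₁ := ⟨(α, β), h⟩)
    (y₂ := ⟨(α', β'), h'⟩) ⟨rfl, rfl, rfl⟩ ⟨hd.symm, hdβ, hc⟩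
  exact ⟨congrArg (·.val.1) this, congrArg (·.val.2) this⟩

lemma comp_left_cancel {α β γ : Λ.Mor} (hβ : Λ.s α = Λ.r β) (hγ : Λ.s α = Λ.r γ)
    (h : Λ.comp α β hβ = Λ.comp α γ hγ) : β = γ :=
  (Λ.eq_and_eq_of_comp_eq_comp hβ hγ h rfl).2

lemma seg_eq_of_eq_comp {lam : Λ.Mor} {p q : Fin k → ℕ} (hpq : p ≤ q) (hq : q ≤ Λ.d lam)
    {α β γ : Λ.Mor} (hβγ : Λ.s β = Λ.r γ) (hα : Λ.s α = Λ.r (Λ.comp β γ hβγ))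
    (hdα : Λ.d α = p) (hdβ : Λ.d β = q - p) (hlam : lam = Λ.comp α (Λ.comp β γ hβγ) hα) :
    Λ.seg lam p q hpq hq = β := by
  unfold seg
  dsimp only
  generalize_proofs _ hA hB
  obtain ⟨hdA, -, hlamA⟩ := hA.choose_spec
  obtain ⟨hdB, -, hAB⟩ := hB.choose_spec
  have hA₂ := (Λ.eq_and_eq_of_comp_eq_comp _ _ (hlamA.symm.trans hlam) (hdA.trans hdα.symm)).2
  exact (Λ.eq_and_eq_of_comp_eq_comp _ _ (hAB.symm.trans hA₂) (hdB.trans hdβ.symm)).1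

lemma comp_seg_zero_seg (lam : Λ.Mor) (n : Fin k → ℕ) (hn : n ≤ Λ.d lam) :
    ∃ h, Λ.comp (Λ.seg lam 0 n zero_le hn) (Λ.seg lam n (Λ.d lam) hn le_rfl) h = lam := by
  obtain ⟨⟨⟨x, y⟩, hxy⟩, ⟨hdx, hdy, hlam⟩, -⟩ :=
    Λ.factor lam n (Λ.d lam - n) (add_tsub_cancel_of_le hn).symm
  dsimp only at hdx hdy hlam
  have hid : Λ.s (Λ.id (Λ.r lam)) = Λ.r (Λ.comp x y hxy) := by rw [s_id, ← hlam]
  have hx : Λ.seg lam 0 n zero_le hn = x :=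
    Λ.seg_eq_of_eq_comp _ _ hxy hid (Λ.d_id _) (by rw [hdx, tsub_zero])
      ((Λ.id_comp lam).symm.trans (Λ.comp_congr _ _ rfl hlam))
  have hy' : Λ.s x = Λ.r (Λ.comp y (Λ.id (Λ.s y)) (Λ.r_id _).symm) := by rw [Λ.comp_id]; exact hxy
  have hy : Λ.seg lam n (Λ.d lam) hn le_rfl = y :=
    Λ.seg_eq_of_eq_comp _ _ _ hy' hdx hdy (hlam.trans (Λ.comp_congr _ _ rfl (Λ.comp_id y).symm))
  exact ⟨by rw [hx, hy]; exact hxy, (Λ.comp_congr _ _ hx hy).trans hlam.symm⟩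

lemma comp_eq_comp_comp {x y lam τ : Λ.Mor} (hxy : Λ.s x = Λ.r y)
    (hlam : Λ.comp x y hxy = lam) (hτ : Λ.s lam = Λ.r τ) (hyτ : Λ.s y = Λ.r τ) :
    Λ.comp lam τ hτ = Λ.comp x (Λ.comp y τ hyτ) (hxy.trans (Λ.r_comp y τ hyτ).symm) := by
  subst hlam
  exact Λ.assoc x y τ hxy hyτ

lemma r_eq_of_initSeg {μ lam : Λ.Mor} (h : Λ.InitSeg μ lam) : Λ.r lam = Λ.r μ := by
  obtain ⟨ρ, hρ, rfl⟩ := h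
  exact Λ.r_comp μ ρ hρ

lemma exists_eq_comp_of_initSeg_comp {α β lam : Λ.Mor} (hβ : Λ.s α = Λ.r β)
    (h : Λ.InitSeg (Λ.comp α β hβ) lam) : ∃ ρ h', lam = Λ.comp α ρ h' := by
  obtain ⟨σ, hσ, rfl⟩ := h
  exact ⟨_, _, Λ.assoc α β σ hβ ((Λ.s_comp α β hβ).symm.trans hσ)⟩

lemma initSeg_comp_comp_iff {α β ρ : Λ.Mor} (hβ : Λ.s α = Λ.r β) (hρ : Λ.s α = Λ.r ρ) :
    Λ.InitSeg (Λ.comp α β hβ) (Λ.comp α ρ hρ) ↔ Λ.InitSeg β ρ := by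
  constructor
  · rintro ⟨σ, hσ, e⟩
    have hβσ : Λ.s β = Λ.r σ := (Λ.s_comp α β hβ).symm.trans hσ
    exact ⟨σ, hβσ, Λ.comp_left_cancel _ _ (e.trans (Λ.assoc α β σ hβ hβσ))⟩
  · rintro ⟨σ, hσ, rfl⟩
    exact ⟨σ, (Λ.s_comp α β hβ).trans hσ, (Λ.assoc α β σ hβ hσ).symm⟩

lemma d_comp_eq_sup_iff {α β γ ρ : Λ.Mor} (hβ : Λ.s α = Λ.r β) (hγ : Λ.s α = Λ.r γ)
    (hρ : Λ.s α = Λ.r ρ) :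
    Λ.d (Λ.comp α ρ hρ) = Λ.d (Λ.comp α β hβ) ⊔ Λ.d (Λ.comp α γ hγ) ↔
      Λ.d ρ = Λ.d β ⊔ Λ.d γ := by
  have add_sup_add (a b c : Fin k → ℕ) : (a + b) ⊔ (a + c) = a + (b ⊔ c) := by
    funext i
    exact Nat.add_max_add_left (a i) (b i) (c i)
  rw [d_comp, d_comp, d_comp, add_sup_add, add_right_inj]

lemma MCE_comp_comp (α β γ : Λ.Mor) (hβ : Λ.s α = Λ.r β) (hγ : Λ.s α = Λ.r γ) :
    Λ.MCE (Λ.comp α β hβ) (Λ.comp α γ hγ)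
      = {lam | ∃ ρ ∈ Λ.MCE β γ, ∃ h, lam = Λ.comp α ρ h} := by
  ext lam
  constructor
  · rintro ⟨hd, hβlam, hγlam⟩
    obtain ⟨ρ, hρ, rfl⟩ := Λ.exists_eq_comp_of_initSeg_comp hβ hβlam
    exact ⟨ρ, ⟨(Λ.d_comp_eq_sup_iff hβ hγ hρ).1 hd, (Λ.initSeg_comp_comp_iff hβ hρ).1 hβlam,
      (Λ.initSeg_comp_comp_iff hγ hρ).1 hγlam⟩, hρ, rfl⟩
  · rintro ⟨ρ, ⟨hd, hβρ, hγρ⟩, hρ, rfl⟩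
    exact ⟨(Λ.d_comp_eq_sup_iff hβ hγ hρ).2 hd, (Λ.initSeg_comp_comp_iff hβ hρ).2 hβρ,
      (Λ.initSeg_comp_comp_iff hγ hρ).2 hγρ⟩

lemma MCE_comp_comp_eq_empty_iff (α β γ : Λ.Mor) (hβ : Λ.s α = Λ.r β)
    (hγ : Λ.s α = Λ.r γ) :
    Λ.MCE (Λ.comp α β hβ) (Λ.comp α γ hγ) = ∅ ↔ Λ.MCE β γ = ∅ := by
  simp only [MCE_comp_comp, Set.eq_empty_iff_forall_notMem, Set.mem_ofPred_eq]
  constructor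
  · intro h ρ hρ
    have hαρ : Λ.s α = Λ.r ρ := hβ.trans (Λ.r_eq_of_initSeg hρ.2.1).symm
    exact h _ ⟨ρ, hρ, hαρ, rfl⟩
  · rintro h _ ⟨ρ, hρ, -⟩
    exact h ρ hρ

theorem MCE_common_initial_segment (μ ν τ : Λ.Mor)
    (m : Fin k → ℕ)
    (hm : m ≤ Λ.d μ ⊓ Λ.d ν)
    (hseg : Λ.seg μ 0 m zero_le (hm.trans inf_le_left)
          = Λ.seg ν 0 m zero_le (hm.trans inf_le_right))
    (hμτ : Λ.s μ = Λ.r τ) (hντ : Λ.s ν = Λ.r τ)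
    (h1 : Λ.s (Λ.seg μ m (Λ.d μ) (hm.trans inf_le_left) le_rfl) = Λ.r τ)
    (h2 : Λ.s (Λ.seg ν m (Λ.d ν) (hm.trans inf_le_right) le_rfl) = Λ.r τ) :
    Λ.MCE (Λ.comp μ τ hμτ) (Λ.comp ν τ hντ)
      = {lam | ∃ ρ ∈ Λ.MCE (Λ.comp (Λ.seg μ m (Λ.d μ) (hm.trans inf_le_left) le_rfl) τ h1)
                           (Λ.comp (Λ.seg ν m (Λ.d ν) (hm.trans inf_le_right) le_rfl) τ h2),
          ∃ hcomp, lam = Λ.comp (Λ.seg μ 0 m zero_le (hm.trans inf_le_left)) ρ hcomp} ∧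
    ((Λ.MCE (Λ.comp μ τ hμτ) (Λ.comp ν τ hντ) = ∅) ↔
     (Λ.MCE (Λ.comp (Λ.seg μ m (Λ.d μ) (hm.trans inf_le_left) le_rfl) τ h1)
            (Λ.comp (Λ.seg ν m (Λ.d ν) (hm.trans inf_le_right) le_rfl) τ h2) = ∅)) := by
  obtain ⟨hμ, eμ⟩ := Λ.comp_seg_zero_seg μ m (hm.trans inf_le_left)
  obtain ⟨_, eν⟩ := Λ.comp_seg_zero_seg ν m (hm.trans inf_le_right)
  simp only [← hseg] at eν
  rw [Λ.comp_eq_comp_comp hμ eμ hμτ h1, Λ.comp_eq_comp_comp _ eν hντ h2]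
  exact ⟨Λ.MCE_comp_comp _ _ _ _ _, Λ.MCE_comp_comp_eq_empty_iff _ _ _ _ _⟩

end KGraph
end

section
/- A k-graph Λ is aperiodic (for every pair of distinct α, β ∈ Λ with s(α) = s(β) there exists τ ∈ s(α)Λ with MCE(ατ, βτ) = ∅) if and only if for every pair of distinct μ, ν ∈ Λ with s(μ) = s(ν), r(μ) = r(ν), and d(μ) ∧ d(ν) = 0, there exists τ ∈ s(μ)Λ with MCE(μτ, ντ) = ∅. -/
namespace KGraph

variable {k : ℕ} (Λ : KGraph k)

/-! Factor `α = κμ` and `β = κ'ν` with `d κ = d κ' = d α ∧ d β`. If `κ ≠ κ'`, unique factorisation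
shows that `α` and `β` (and so `ατ` and `βτ`) have no common extension at all. If `κ = κ'`, the pair
`μ, ν` satisfies the reduced hypothesis, and every element of `MCE(κμτ, κντ)` is `κ` followed by an
element of `MCE(μτ, ντ)`. -/

lemma sup_add_add_left {ι α : Type*} [LinearOrder α] [Add α] [AddLeftMono α] (a b c : ι → α) :
    (a + b) ⊔ (a + c) = a + b ⊔ c :=
  funext fun i => max_add_add_left (a i) (b i) (c i)

lemma inf_eq_zero_of_eq_add_inf_add {ι M : Type*} [AddMonoid M] [LinearOrder M] [AddLeftMono M]
    [IsLeftCancelAdd M] {a b c : ι → M} (h : a = (a + b) ⊓ (a + c)) : b ⊓ c = 0 := by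
  have hadd : (a + b) ⊓ (a + c) = a + b ⊓ c :=
    funext fun i => min_add_add_left (a i) (b i) (c i)
  rw [hadd] at h
  exact add_eq_left.mp h.symm

lemma eq_and_eq_of_comp_eq_comp_s8 {a b ρ σ : Λ.Mor} {ha : Λ.s a = Λ.r ρ} {hb : Λ.s b = Λ.r σ}
    (heq : Λ.comp a ρ ha = Λ.comp b σ hb) (hd : Λ.d a = Λ.d b) : a = b ∧ ρ = σ := by
  have hdσ : Λ.d σ = Λ.d ρ := by
    have := Λ.d_comp a ρ ha
    rw [heq, Λ.d_comp, hd] at this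
    exact add_left_cancel this
  obtain ⟨_, -, huniq⟩ := Λ.factor (Λ.comp a ρ ha) (Λ.d a) (Λ.d ρ) (Λ.d_comp a ρ ha)
  have := (huniq ⟨(a, ρ), ha⟩ ⟨rfl, rfl, rfl⟩).trans (huniq ⟨(b, σ), hb⟩ ⟨hd.symm, hdσ, heq⟩).symm
  exact Prod.ext_iff.mp (congrArg Subtype.val this)

lemma exists_eq_comp_of_le {lam : Λ.Mor} {m : Fin k → ℕ} (hm : m ≤ Λ.d lam) :
    ∃ (κ μ : Λ.Mor) (h : Λ.s κ = Λ.r μ), Λ.d κ = m ∧ lam = Λ.comp κ μ h := by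
  have hsplit : Λ.d lam = m + (Λ.d lam - m) := (add_tsub_cancel_of_le hm).symm
  obtain ⟨⟨⟨κ, μ⟩, h⟩, hκ, -, hlam⟩ := (Λ.factor lam m _ hsplit).exists
  exact ⟨κ, μ, h, hκ, hlam⟩

lemma InitSeg.exists_of_comp {κ μ lam : Λ.Mor} {h : Λ.s κ = Λ.r μ}
    (hlam : Λ.InitSeg (Λ.comp κ μ h) lam) :
    ∃ (lam' : Λ.Mor) (h' : Λ.s κ = Λ.r lam'), lam = Λ.comp κ lam' h' ∧ Λ.InitSeg μ lam' := by
  obtain ⟨ρ, hρ, rfl⟩ := hlam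
  rw [Λ.s_comp] at hρ
  exact ⟨Λ.comp μ ρ hρ, h.trans (Λ.r_comp μ ρ hρ).symm, Λ.assoc κ μ ρ h hρ, ρ, hρ, rfl⟩

lemma MCE_comp_eq_empty_of_ne {κ κ' μ ν : Λ.Mor} {h : Λ.s κ = Λ.r μ} {h' : Λ.s κ' = Λ.r ν}
    (hd : Λ.d κ = Λ.d κ') (hne : κ ≠ κ') : Λ.MCE (Λ.comp κ μ h) (Λ.comp κ' ν h') = ∅ := by
  refine Set.eq_empty_of_forall_notMem fun lam ⟨_, hμ, hν⟩ => hne ?_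
  obtain ⟨_, _, rfl, -⟩ := InitSeg.exists_of_comp Λ hμ
  obtain ⟨_, _, heq, -⟩ := InitSeg.exists_of_comp Λ hν
  exact (eq_and_eq_of_comp_eq_comp_s8 Λ heq hd).1

lemma MCE_comp_eq_empty {κ μ ν : Λ.Mor} {h : Λ.s κ = Λ.r μ} {h' : Λ.s κ = Λ.r ν}
    (hμν : Λ.MCE μ ν = ∅) : Λ.MCE (Λ.comp κ μ h) (Λ.comp κ ν h') = ∅ := by
  refine Set.eq_empty_of_forall_notMem fun lam ⟨hd, hμ, hν⟩ => ?_
  obtain ⟨lam₁, _, rfl, hμ'⟩ := InitSeg.exists_of_comp Λ hμ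
  obtain ⟨lam₂, _, heq, hν'⟩ := InitSeg.exists_of_comp Λ hν
  obtain rfl := (eq_and_eq_of_comp_eq_comp_s8 Λ heq rfl).2
  refine hμν.subset ⟨?_, hμ', hν'⟩
  rw [Λ.d_comp, Λ.d_comp, Λ.d_comp, sup_add_add_left] at hd
  exact add_left_cancel hd

/-- `Λ` is aperiodic iff for every distinct pair `μ, ν` with the same
source and range and `d(μ) ∧ d(ν) = 0` there exists `τ ∈ s(μ)Λ` with
`MCE(μτ, ντ) = ∅`. -/
theorem aperiodic_iff_reduced :
    Λ.Aperiodic ↔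
      ∀ μ ν : Λ.Mor, μ ≠ ν → Λ.s μ = Λ.s ν → Λ.r μ = Λ.r ν → Λ.d μ ⊓ Λ.d ν = 0 →
        ∃ (τ : Λ.Mor) (hμ : Λ.s μ = Λ.r τ) (hν : Λ.s ν = Λ.r τ),
          Λ.MCE (Λ.comp μ τ hμ) (Λ.comp ν τ hν) = ∅ := by
  refine ⟨fun h μ ν hne hs _ _ => h μ ν hne hs, fun h α β hne hs => ?_⟩
  obtain ⟨κ, μ, hκμ, hdκ, hα⟩ := Λ.exists_eq_comp_of_le (inf_le_left : Λ.d α ⊓ Λ.d β ≤ Λ.d α)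
  obtain ⟨κ', ν, hκ'ν, hdκ', hβ⟩ := Λ.exists_eq_comp_of_le (inf_le_right : Λ.d α ⊓ Λ.d β ≤ Λ.d β)
  subst hα hβ
  have hsμ := Λ.s_comp κ μ hκμ
  have hsν := Λ.s_comp κ' ν hκ'ν
  have hsμν : Λ.s μ = Λ.s ν := hsμ.symm.trans (hs.trans hsν)
  by_cases hκ : κ = κ'
  · subst hκ
    rw [Λ.d_comp, Λ.d_comp] at hdκ
    obtain ⟨τ, hμτ, hντ, hτ⟩ := h μ ν (fun hμν => hne (by subst hμν; rfl)) hsμν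
      (hκμ.symm.trans hκ'ν) (inf_eq_zero_of_eq_add_inf_add hdκ)
    refine ⟨τ, hsμ.trans hμτ, hsν.trans hντ, ?_⟩
    rw [Λ.assoc κ μ τ hκμ hμτ, Λ.assoc κ ν τ hκ'ν hντ]
    exact Λ.MCE_comp_eq_empty hτ
  · have hμτ : Λ.s μ = Λ.r (Λ.id (Λ.s μ)) := (Λ.r_id _).symm
    have hντ : Λ.s ν = Λ.r (Λ.id (Λ.s μ)) := hsμν.symm.trans hμτ
    refine ⟨Λ.id (Λ.s μ), hsμ.trans hμτ, hsν.trans hντ, ?_⟩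
    rw [Λ.assoc κ μ _ hκμ hμτ, Λ.assoc κ' ν _ hκ'ν hντ]
    exact Λ.MCE_comp_eq_empty_of_ne (hdκ.trans hdκ'.symm) hκ

end KGraph
end

section
/- Let Λ be an aperiodic finitely aligned k-graph, v ∈ Λ^0, and H a finite subset of Λv. Then there exists τ ∈ vΛ such that MCE(ατ, βτ) = ∅ for every pair of distinct α, β ∈ H. -/
namespace KGraph

variable {k : ℕ} (Λ : KGraph k)

/-! Separation by `τ` survives extending `τ` to `τσ`, since an empty `MCE(ατ, βτ)` stays empty
after appending `σ` to both paths. So the finitely many pairs of `H` can be handled one at a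
time: once `τ` separates the earlier pairs, aperiodicity applied to `ατ ≠ βτ` yields `σ`
separating the next pair, and `τσ` separates all of them. -/

section InitSeg

variable {Λ}

lemma InitSeg.trans {μ ν lam : Λ.Mor} (h₁ : Λ.InitSeg μ ν) (h₂ : Λ.InitSeg ν lam) :
    Λ.InitSeg μ lam := by
  obtain ⟨ρ, hρ, rfl⟩ := h₁
  obtain ⟨σ, hσ, rfl⟩ := h₂
  rw [Λ.s_comp] at hσ
  exact ⟨Λ.comp ρ σ hσ, hρ.trans (Λ.r_comp ρ σ hσ).symm, Λ.assoc μ ρ σ hρ hσ⟩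

lemma InitSeg.unique {μ ν lam : Λ.Mor} (hμ : Λ.InitSeg μ lam) (hν : Λ.InitSeg ν lam)
    (hd : Λ.d μ = Λ.d ν) : μ = ν := by
  obtain ⟨ρ, hρ, rfl⟩ := hμ
  obtain ⟨σ, hσ, heq⟩ := hν
  have hdρσ : Λ.d ρ = Λ.d σ := by
    have := congrArg Λ.d heq
    rw [Λ.d_comp, Λ.d_comp, hd] at this
    exact add_left_cancel this
  have := (Λ.factor (Λ.comp μ ρ hρ) (Λ.d μ) (Λ.d ρ) (Λ.d_comp μ ρ hρ)).unique
    (y₁ := ⟨(μ, ρ), hρ⟩) (y₂ := ⟨(ν, σ), hσ⟩) ⟨rfl, rfl, rfl⟩ ⟨hd.symm, hdρσ.symm, heq⟩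
  exact congrArg (fun p => p.val.1) this

lemma exists_initSeg (lam : Λ.Mor) {n : Fin k → ℕ} (hn : n ≤ Λ.d lam) :
    ∃ μ, Λ.d μ = n ∧ Λ.InitSeg μ lam := by
  have hsplit : Λ.d lam = n + (Λ.d lam - n) := (add_tsub_cancel_of_le hn).symm
  obtain ⟨⟨⟨μ, ρ⟩, h⟩, hdμ, -, heq⟩ := (Λ.factor lam n _ hsplit).exists
  exact ⟨μ, hdμ, ρ, h, heq⟩

/-- Both contain the initial segment of `lam` of degree `d μ`, which is unique. -/
lemma InitSeg.of_initSeg_of_d_le {μ lam' lam : Λ.Mor} (hμ : Λ.InitSeg μ lam)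
    (hlam' : Λ.InitSeg lam' lam) (hd : Λ.d μ ≤ Λ.d lam') : Λ.InitSeg μ lam' := by
  obtain ⟨ν, hdν, hν⟩ := exists_initSeg lam' hd
  rwa [hμ.unique (hν.trans hlam') hdν.symm]

lemma comp_right_cancel {α β τ : Λ.Mor} (hα : Λ.s α = Λ.r τ) (hβ : Λ.s β = Λ.r τ)
    (heq : Λ.comp α τ hα = Λ.comp β τ hβ) : α = β := by
  have hd := congrArg Λ.d heq
  rw [Λ.d_comp, Λ.d_comp] at hd
  exact InitSeg.unique ⟨τ, hα, rfl⟩ ⟨τ, hβ, heq⟩ (add_right_cancel hd)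

/-- A common extension of `μρ` and `νρ` cuts down, at degree `d μ ⊔ d ν`, to a minimal common
extension of `μ` and `ν`. -/
lemma mce_comp_eq_empty {μ ν : Λ.Mor} (hmce : Λ.MCE μ ν = ∅) (ρ : Λ.Mor)
    (hμ : Λ.s μ = Λ.r ρ) (hν : Λ.s ν = Λ.r ρ) :
    Λ.MCE (Λ.comp μ ρ hμ) (Λ.comp ν ρ hν) = ∅ := by
  refine Set.eq_empty_of_forall_notMem ?_
  rintro lam ⟨hdlam, hμlam, hνlam⟩
  have hle : Λ.d μ ⊔ Λ.d ν ≤ Λ.d lam := by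
    rw [hdlam, Λ.d_comp, Λ.d_comp]
    exact sup_le_sup le_self_add le_self_add
  obtain ⟨lam', hdlam', hlam'⟩ := exists_initSeg lam hle
  have hμ' := (InitSeg.trans ⟨ρ, hμ, rfl⟩ hμlam).of_initSeg_of_d_le hlam' (hdlam' ▸ le_sup_left)
  have hν' := (InitSeg.trans ⟨ρ, hν, rfl⟩ hνlam).of_initSeg_of_d_le hlam' (hdlam' ▸ le_sup_right)
  exact (Set.eq_empty_iff_forall_notMem.mp hmce) lam' ⟨hdlam', hμ', hν'⟩

end InitSeg

def Separates (τ α β : Λ.Mor) : Prop :=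
  ∀ (hα : Λ.s α = Λ.r τ) (hβ : Λ.s β = Λ.r τ), Λ.MCE (Λ.comp α τ hα) (Λ.comp β τ hβ) = ∅

section Separates

variable {Λ}

lemma Separates.comp {τ α β : Λ.Mor} (hsep : Λ.Separates τ α β) (σ : Λ.Mor)
    (h : Λ.s τ = Λ.r σ) : Λ.Separates (Λ.comp τ σ h) α β := by
  intro hασ hβσ
  have hα : Λ.s α = Λ.r τ := hασ.trans (Λ.r_comp τ σ h)
  have hβ : Λ.s β = Λ.r τ := hβσ.trans (Λ.r_comp τ σ h)
  rw [← Λ.assoc α τ σ hα h, ← Λ.assoc β τ σ hβ h]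
  exact mce_comp_eq_empty (hsep hα hβ) σ _ _

lemma Aperiodic.exists_separates_comp (hAp : Λ.Aperiodic) {α β τ : Λ.Mor} (hne : α ≠ β)
    (hα : Λ.s α = Λ.r τ) (hβ : Λ.s β = Λ.r τ) :
    ∃ (σ : Λ.Mor) (h : Λ.s τ = Λ.r σ), Λ.Separates (Λ.comp τ σ h) α β := by
  obtain ⟨σ, hασ, _, hmce⟩ := hAp _ _ (fun heq => hne (comp_right_cancel hα hβ heq))
    (by rw [Λ.s_comp, Λ.s_comp])
  have h : Λ.s τ = Λ.r σ := (Λ.s_comp α τ hα).symm.trans hασ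
  refine ⟨σ, h, fun _ _ => ?_⟩
  rw [← Λ.assoc α τ σ hα h, ← Λ.assoc β τ σ hβ h]
  exact hmce

lemma Aperiodic.exists_separates_of_finite (hAp : Λ.Aperiodic) (v : Λ.Obj)
    {S : Set (Λ.Mor × Λ.Mor)} (hS : S.Finite)
    (hSv : ∀ p ∈ S, Λ.s p.1 = v ∧ Λ.s p.2 = v ∧ p.1 ≠ p.2) :
    ∃ τ, Λ.r τ = v ∧ ∀ p ∈ S, Λ.Separates τ p.1 p.2 := by
  induction S, hS using Set.Finite.induction_on with
  | empty => exact ⟨Λ.id v, Λ.r_id v, by simp⟩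
  | @insert p S _ _ ih =>
    obtain ⟨τ, hrτ, hτ⟩ := ih fun q hq => hSv q (Set.mem_insert_of_mem p hq)
    obtain ⟨hp₁, hp₂, hne⟩ := hSv p (Set.mem_insert p S)
    obtain ⟨σ, h, hσ⟩ := hAp.exists_separates_comp hne (hp₁.trans hrτ.symm) (hp₂.trans hrτ.symm)
    refine ⟨Λ.comp τ σ h, (Λ.r_comp τ σ h).trans hrτ, ?_⟩
    rintro q (rfl | hq)
    · exact hσ
    · exact (hτ q hq).comp σ h

end Separates

/-- In an aperiodic finitely aligned `k`-graph, for any vertex `v` and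
finite `H ⊆ Λv` there is `τ ∈ vΛ` with `MCE(ατ, βτ) = ∅` for all
distinct `α, β ∈ H`. -/
theorem aperiodic_simultaneous_separation
    (hAp : Λ.Aperiodic)
    (v : Λ.Obj) (H : Set Λ.Mor) (hfin : H.Finite) (hH : ∀ α ∈ H, Λ.s α = v) :
    ∃ τ : Λ.Mor, Λ.r τ = v ∧
      ∀ α ∈ H, ∀ β ∈ H, α ≠ β →
        ∀ (hα : Λ.s α = Λ.r τ) (hβ : Λ.s β = Λ.r τ),
          Λ.MCE (Λ.comp α τ hα) (Λ.comp β τ hβ) = ∅ := by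
  obtain ⟨τ, hrτ, hτ⟩ := hAp.exists_separates_of_finite v (S := {p ∈ H ×ˢ H | p.1 ≠ p.2})
    ((hfin.prod hfin).subset fun p hp => hp.1)
    (fun p hp => ⟨hH p.1 hp.1.1, hH p.2 hp.1.2, hp.2⟩)
  exact ⟨τ, hrτ, fun α hα β hβ hne => hτ (α, β) ⟨⟨hα, hβ⟩, hne⟩⟩

end KGraph
end
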